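/- arXiv:1111.3705 — 5 statements merged into one kernel-verified Lean document; each statement's English description precedes it below -/
import Mathlib

section
/- Let V be a finite-dimensional complex representation of G with character χ_V. For any 1 ≤ k ≤ n+1 and any strictly increasing index tuples 0 ≤ i_1 < … < i_k ≤ n and 0 ≤ j_1 < … < j_k ≤ n, the k×k minor of the Clebsch–Gordan matrix M[V] on rows i_1,…,i_k and columns j_1,…,j_k equals (1/|G|^k) · Σ_{0 ≤ p_1 < … < p_k ≤ n} det(χ_{i_a}(g_{p_b}))_{1≤a,b≤k} · conj( det(χ_{j_a}(g_{p_b}))_{1≤a,b≤k} ) · Π_{m=1}^k |C_{p_m}|·χ_V(g_{p_m}). -/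
/-!
Grouping the sum that defines `⟨χ_V χ_i, χ_j⟩` by conjugacy classes factors the Clebsch–Gordan
matrix as `|G|⁻¹ • X * diagonal (|C_p| χ_V(g_p)) * Xᴴ`, where `X i p = χ_i(g_p)` is the
character table. Its minors are then given by the Cauchy–Binet formula, proved by expanding
`det (A * B)` over all maps `f : Fin k → n`: non-injective `f` contribute zero, and an injective
`f` is uniquely a strictly monotone `P` composed with a permutation.
-/

open CategoryTheory
open scoped Classical

/-- Inner product of class functions: `⟨a, b⟩ = (1/|G|) Σ_{g∈G} a(g)·conj(b(g))`. -/
noncomputable def cgIP {G : Type*} [Group G] [Fintype G] (a b : G → ℂ) : ℂ :=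
  (Fintype.card G : ℂ)⁻¹ * ∑ x : G, a x * (starRingEnd ℂ) (b x)

/-- The size of the conjugacy class of `x`. -/
noncomputable def classCard {G : Type*} [Group G] (x : G) : ℕ :=
  Nat.card {y : G // IsConj x y}

open Finset Matrix

theorem Tuple.sort_strictMono_comp {α : Type*} [LinearOrder α] {k : ℕ} {P : Fin k → α}
    (hP : StrictMono P) (σ : Equiv.Perm (Fin k)) : Tuple.sort (P ∘ σ) = σ⁻¹ := by
  refine (Tuple.eq_sort_iff.2 ⟨?_, fun i j hij hP_eq => ?_⟩).symm
  · simpa [Function.comp_def] using hP.monotone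
  · simp only [Equiv.Perm.coe_inv, Function.comp_apply, Equiv.apply_symm_apply] at hP_eq
    exact absurd (hP.injective hP_eq) hij.ne

theorem Finset.sum_injective_eq_sum_strictMono_sum_perm {α M : Type*} [LinearOrder α] [Fintype α]
    [AddCommMonoid M] {k : ℕ} (F : (Fin k → α) → M) :
    ∑ f with Function.Injective f, F f =
      ∑ P with StrictMono P, ∑ σ : Equiv.Perm (Fin k), F (P ∘ σ) := by
  rw [← Finset.sum_product']
  refine Finset.sum_nbij' (fun f => (f ∘ Tuple.sort f, (Tuple.sort f)⁻¹))
    (fun Pσ => Pσ.1 ∘ Pσ.2) (fun f hf => ?_) (fun Pσ hPσ => ?_) (fun f _ => ?_)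
    (fun Pσ hPσ => ?_) (fun f _ => ?_)
  · simp only [mem_filter, mem_univ, true_and, mem_product, and_true] at hf ⊢
    exact (Tuple.monotone_sort f).strictMono_of_injective (hf.comp (Tuple.sort f).injective)
  · simp only [mem_filter, mem_univ, true_and, mem_product, and_true] at hPσ ⊢
    exact hPσ.injective.comp Pσ.2.injective
  · ext; simp
  · simp only [mem_filter, mem_univ, true_and, mem_product, and_true] at hPσ
    ext <;> simp [Tuple.sort_strictMono_comp hPσ]
  · congr 1; ext; simp

namespace Matrix

variable {R : Type*} [CommRing R]

theorem det_mul_eq_sum_det_submatrix_mul_prod {m n : Type*} [Fintype m] [DecidableEq m]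
    [Fintype n] (A : Matrix m n R) (B : Matrix n m R) :
    (A * B).det = ∑ f : m → n, (A.submatrix id f).det * ∏ i, B (f i) i := by
  simp only [det_apply', mul_apply, prod_univ_sum, Fintype.piFinset_univ, mul_sum, sum_mul]
  rw [sum_comm]
  refine sum_congr rfl fun f _ => sum_congr rfl fun σ _ => ?_
  simp only [submatrix_apply, id_eq, prod_mul_distrib]
  ring

theorem det_submatrix_id_eq_zero_of_not_injective {m n : Type*} [Fintype m] [DecidableEq m]
    (A : Matrix m n R) {f : m → n} (hf : ¬Function.Injective f) :
    (A.submatrix id f).det = 0 := by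
  obtain ⟨i, j, hij, hne⟩ := Function.not_injective_iff.1 hf
  exact det_zero_of_column_eq hne fun a => by simp [hij]

theorem det_mul_eq_sum_strictMono_submatrix {n : Type*} [Fintype n] [LinearOrder n] {k : ℕ}
    (A : Matrix (Fin k) n R) (B : Matrix n (Fin k) R) :
    (A * B).det = ∑ P with StrictMono P, (A.submatrix id P).det * (B.submatrix P id).det := by
  have hnonzero : ∀ f ∈ univ, (A.submatrix id f).det * ∏ i, B (f i) i ≠ 0 →
      Function.Injective f := fun f _ hf => by_contra fun h =>
    hf (by rw [det_submatrix_id_eq_zero_of_not_injective A h, zero_mul])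
  rw [det_mul_eq_sum_det_submatrix_mul_prod, ← sum_filter_of_ne hnonzero,
    sum_injective_eq_sum_strictMono_sum_perm]
  refine sum_congr rfl fun P _ => ?_
  rw [det_apply' (B.submatrix P id), mul_sum]
  refine sum_congr rfl fun σ _ => ?_
  rw [show A.submatrix id (P ∘ σ) = (A.submatrix id P).submatrix id σ from rfl, det_permute']
  simp only [submatrix_apply, id_eq, Function.comp_apply]
  ring

/- The `DecidableEq n` binder, separate from the one `LinearOrder n` provides, lets `diagonal w`
match a diagonal matrix built with any decidability instance. -/
theorem det_mul_diagonal_mul_conjTranspose [StarRing R] {n : Type*} [Fintype n] [LinearOrder n]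
    [DecidableEq n] {k : ℕ} (A B : Matrix (Fin k) n R) (w : n → R) :
    (A * diagonal w * Bᴴ).det = ∑ P with StrictMono P,
      (A.submatrix id P).det * star (B.submatrix id P).det * ∏ m, w (P m) := by
  rw [Matrix.mul_assoc, det_mul_eq_sum_strictMono_submatrix]
  refine sum_congr rfl fun P _ => ?_
  have hsub : (diagonal w * Bᴴ).submatrix P id = diagonal (w ∘ P) * (B.submatrix id P)ᴴ := by
    ext a b
    simp [diagonal_mul]
  rw [hsub, det_mul, det_diagonal, det_conjTranspose]
  simp only [Function.comp_apply]
  ring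

end Matrix

theorem sum_eq_sum_classCard_smul {G κ M : Type*} [Group G] [Fintype G] [Fintype κ]
    [AddCommMonoid M] (g : κ → G) (hg : ∀ x : G, ∃! p, IsConj (g p) x) (f : G → M)
    (hf : ∀ x y, IsConj x y → f x = f y) :
    ∑ x, f x = ∑ p, classCard (g p) • f (g p) :=
  calc ∑ x, f x = ∑ x, ∑ p, if IsConj (g p) x then f (g p) else 0 := by
        refine sum_congr rfl fun x _ => ?_
        obtain ⟨p, hp, huniq⟩ := hg x
        rw [Fintype.sum_eq_single p fun q hq => if_neg (mt (huniq q) hq), if_pos hp, hf _ _ hp]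
    _ = ∑ p, classCard (g p) • f (g p) := by
        rw [sum_comm]
        refine sum_congr rfl fun p _ => ?_
        rw [← sum_filter, sum_const, classCard, Nat.card_eq_fintype_card, Fintype.card_subtype]

theorem FDRep.character_eq_of_isConj {G : Type*} [Group G] (V : FDRep ℂ G) {x y : G}
    (h : IsConj x y) : V.character x = V.character y := by
  obtain ⟨c, rfl⟩ := isConj_iff.1 h
  exact (FDRep.char_conj V x c).symm

theorem cgIP_matrix_submatrix_eq {G κ ι α β : Type*} [Group G] [Fintype G] [Fintype κ]
    [DecidableEq κ]
    (g : κ → G) (hg : ∀ x : G, ∃! p, IsConj (g p) x) (V : FDRep ℂ G) (R : ι → FDRep ℂ G)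
    (I : α → ι) (J : β → ι) :
    (Matrix.of fun i j => cgIP (V.character * (R i).character) (R j).character).submatrix I J =
      (Fintype.card G : ℂ)⁻¹ • (Matrix.of (fun a p => (R (I a)).character (g p)) *
        diagonal (fun p => (classCard (g p) : ℂ) * V.character (g p)) *
        (Matrix.of fun b p => (R (J b)).character (g p))ᴴ) := by
  ext a b
  rw [submatrix_apply, of_apply, cgIP, sum_eq_sum_classCard_smul g hg _ fun x y h => by
    simp only [Pi.mul_apply, V.character_eq_of_isConj h, (R (I a)).character_eq_of_isConj h,
      (R (J b)).character_eq_of_isConj h]]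
  rw [Matrix.smul_apply, mul_apply, smul_eq_mul]
  simp only [mul_diagonal, of_apply, conjTranspose_apply, nsmul_eq_mul, Pi.mul_apply,
    starRingEnd_apply]
  congr 1
  exact sum_congr rfl fun p _ => by ring

theorem stmt1_general {G : Type} [Group G] [Fintype G] {n : ℕ}
    (g : Fin (n + 1) → G)
    (hg : ∀ x : G, ∃! k : Fin (n + 1), IsConj (g k) x)
    (R : Fin (n + 1) → FDRep ℂ G)
    (V : FDRep ℂ G)
    (k : ℕ)
    (I J : Fin k → Fin (n + 1)) :
    ((Matrix.of fun i j : Fin (n + 1) =>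
        cgIP (V.character * (R i).character) ((R j).character)).submatrix I J).det =
      (Fintype.card G : ℂ)⁻¹ ^ k *
        ∑ P ∈ Finset.univ.filter (fun P : Fin k → Fin (n + 1) => StrictMono P),
          (Matrix.of fun a b : Fin k => (R (I a)).character (g (P b))).det *
            (starRingEnd ℂ) (Matrix.of fun a b : Fin k => (R (J a)).character (g (P b))).det *
            ∏ m : Fin k, ((classCard (g (P m)) : ℂ) * V.character (g (P m))) := by
  rw [cgIP_matrix_submatrix_eq g hg V R I J, det_smul, Fintype.card_fin,
    det_mul_diagonal_mul_conjTranspose]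
  rfl

theorem stmt1 {G : Type} [Group G] [Fintype G] {n : ℕ}
    (g : Fin (n + 1) → G) (hg1 : g 0 = 1)
    (hg : ∀ x : G, ∃! k : Fin (n + 1), IsConj (g k) x)
    (R : Fin (n + 1) → FDRep ℂ G)
    (hsimple : ∀ i, Simple (R i))
    (htriv : ∀ x : G, (R 0).character x = 1)
    (hdist : ∀ i j, i ≠ j → ¬ Nonempty (R i ≅ R j))
    (V : FDRep ℂ G)
    (k : ℕ) (hk1 : 1 ≤ k) (hk2 : k ≤ n + 1)
    (I J : Fin k → Fin (n + 1)) (hI : StrictMono I) (hJ : StrictMono J) :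
    ((Matrix.of fun i j : Fin (n + 1) =>
        cgIP (V.character * (R i).character) ((R j).character)).submatrix I J).det =
      (Fintype.card G : ℂ)⁻¹ ^ k *
        ∑ P ∈ Finset.univ.filter (fun P : Fin k → Fin (n + 1) => StrictMono P),
          (Matrix.of fun a b : Fin k => (R (I a)).character (g (P b))).det *
            (starRingEnd ℂ) (Matrix.of fun a b : Fin k => (R (J a)).character (g (P b))).det *
            ∏ m : Fin k, ((classCard (g (P m)) : ℂ) * V.character (g (P m))) :=
  stmt1_general g hg R V k I J
end

section
/- Let ρ: G → GL_d(ℂ) be a representation with character χ_ρ, and for m ≥ 0 let ψ_m: G → ℂ be the class function ψ_m(g) = χ_ρ(g^m) (the character of the m-th Adams operation applied to ρ; ψ_0(g) = d). Let P(q) be the (n+1)×(n+1) matrix over ℂ[[q]] with entries P(q)^i_j = Σ_{m≥0} q^m · ⟨ψ_m·χ_i, χ_j⟩. Then for any 1 ≤ k ≤ n+1 and strictly increasing tuples 0 ≤ i_1 < … < i_k ≤ n, 0 ≤ j_1 < … < j_k ≤ n, the corresponding k×k minor of P(q) equals, in ℂ[[q]], (1/|G|^k) · Σ_{0 ≤ p_1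 < … < p_k ≤ n} det(χ_{i_a}(g_{p_b})) · conj( det(χ_{j_a}(g_{p_b})) ) · Π_{m=1}^k |C_{p_m}|· ( Σ_{m≥0} q^m · trace(ρ(g_{p_m})^m) ). -/
open CategoryTheory
open scoped Classical

/-!
The coefficient of `q^m` in `P^i_j` is the inner product of the class functions `ψ_m χ_i` and
`χ_j`, hence a sum over class representatives:
`|G|⁻¹ Σ_p |C_p| χ_i(g_p) tr(ρ(g_p)^m) conj χ_j(g_p)`. So `P = X D Xᴴ`, where `X = (χ_i(g_p))`
and `D` is diagonal with entries `|G|⁻¹ |C_p| tr (1 - q ρ(g_p))⁻¹`, and every minor of `P` is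
computed by the Cauchy–Binet formula applied to the rows `I` of `X` and the columns `J` of `D Xᴴ`.
-/

open Finset
open scoped Matrix

namespace Matrix

variable {R N m : Type*} [CommRing R] [Fintype m] [DecidableEq m]

theorem sum_perm_prod_mul_det_submatrix_comp (A : Matrix m N R) (B : Matrix N m R) (Q : m → N) :
    ∑ σ : Equiv.Perm m, (∏ i, A i (Q (σ i))) * (B.submatrix (Q ∘ σ) id).det =
      (A.submatrix id Q).det * (B.submatrix Q id).det := by
  rw [← det_transpose (A.submatrix id Q), det_apply', sum_mul]
  refine sum_congr rfl fun σ _ => ?_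
  rw [show B.submatrix (Q ∘ σ) id = (B.submatrix Q id).submatrix σ id from rfl, det_permute]
  simp only [transpose_apply, submatrix_apply, id_eq]
  ring

variable [Fintype N]

theorem det_mul_eq_sum_prod_mul_det_submatrix (A : Matrix m N R) (B : Matrix N m R) :
    (A * B).det = ∑ f : m → N, (∏ i, A i (f i)) * (B.submatrix f id).det := by
  have hrows : A * B = of fun i => ∑ p, A i p • fun j => B p j := by
    ext i j
    simp [mul_apply, Finset.sum_apply]
  rw [hrows]
  exact ((detRowAlternating : (m → R) [⋀^m]→ₗ[R] R).map_sum _).trans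
    (sum_congr rfl fun f _ => det_mul_column (fun i => A i (f i)) (B.submatrix f id))

variable [LinearOrder N] {k : ℕ}

/-- The Cauchy–Binet formula. -/
theorem det_mul_eq_sum_strictMono (A : Matrix (Fin k) N R) (B : Matrix N (Fin k) R) :
    (A * B).det = ∑ Q ∈ univ.filter (fun Q : Fin k → N => StrictMono Q),
      (A.submatrix id Q).det * (B.submatrix Q id).det := by
  have hnoninj : ∀ f : Fin k → N, ¬ f.Injective → (B.submatrix f id).det = 0 := by
    intro f hf
    obtain ⟨i, j, hij, hne⟩ : ∃ i j, f i = f j ∧ i ≠ j := by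
      simpa [Function.Injective] using hf
    exact det_zero_of_row_eq hne (by ext; simp [hij])
  rw [det_mul_eq_sum_prod_mul_det_submatrix, ← sum_filter_of_ne (p := Function.Injective)
    fun f _ hf => by_contra fun hinj => hf (by rw [hnoninj f hinj, mul_zero])]
  simp_rw [← sum_perm_prod_mul_det_submatrix_comp A B]
  rw [← sum_product']
  -- an injective tuple is uniquely a strictly monotone tuple composed with a permutation
  refine sum_nbij' (fun f => (f ∘ Tuple.sort f, (Tuple.sort f)⁻¹)) (fun x => x.1 ∘ x.2)
    ?_ ?_ ?_ ?_ ?_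
  · intro f hf
    simp only [mem_filter, mem_univ, true_and, mem_product, and_true] at hf ⊢
    exact (Tuple.monotone_sort f).strictMono_of_injective (hf.comp (Equiv.injective _))
  · rintro ⟨Q, σ⟩ hx
    simp only [mem_filter, mem_univ, true_and, mem_product, and_true] at hx ⊢
    exact hx.injective.comp σ.injective
  · intro f _
    simp [Function.comp_assoc]
  · rintro ⟨Q, σ⟩ hx
    simp only [mem_filter, mem_univ, true_and, mem_product, and_true] at hx
    have hsort : σ⁻¹ = Tuple.sort (Q ∘ σ) := by
      rw [Tuple.eq_sort_iff]
      refine ⟨by simpa [Function.comp_assoc] using hx.monotone, fun i j hij heq => ?_⟩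
      exact absurd (by simpa using heq) (hx hij).ne
    simp [← hsort, Function.comp_assoc]
  · intro f _
    simp [Function.comp_assoc]

theorem det_map_mul_diagonal_mul_map_conjTranspose [StarRing R] {S : Type*} [CommRing S]
    (f : R →+* S) (X Y : Matrix (Fin k) N R) (w : N → S) :
    (X.map f * diagonal w * Yᴴ.map f).det =
      ∑ Q ∈ univ.filter (fun Q : Fin k → N => StrictMono Q),
        f (X.submatrix id Q).det * f (star (Y.submatrix id Q).det) * ∏ a, w (Q a) := by
  rw [Matrix.mul_assoc, det_mul_eq_sum_strictMono]
  refine sum_congr rfl fun Q _ => ?_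
  have hXQ : ((X.map f).submatrix id Q).det = f (X.submatrix id Q).det := (f.map_det _).symm
  have hYQ : ((diagonal w * Yᴴ.map f).submatrix Q id).det =
      (∏ a, w (Q a)) * f (star (Y.submatrix id Q).det) := by
    rw [← det_conjTranspose, f.map_det, ← det_mul_column]
    congr 1
    ext a b
    simp [diagonal_mul]
  rw [hXQ, hYQ]
  ring

end Matrix

theorem Matrix.trace_apply_conj {G n R : Type*} [Group G] [Fintype n] [DecidableEq n] [CommRing R]
    (ρ : G →* Matrix.GeneralLinearGroup n R) (c x : G) :
    Matrix.trace (ρ (c * x * c⁻¹) : Matrix n n R) = Matrix.trace (ρ x : Matrix n n R) := by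
  rw [map_mul, map_mul, map_inv, Units.val_mul, Units.val_mul, Matrix.trace_units_conj]

section ClassFunction

variable {G : Type*} [Group G] [Fintype G] {ι : Type*} [Fintype ι]

theorem sum_eq_sum_classCard_smul_s5 {M : Type*} [AddCommMonoid M] (g : ι → G)
    (hg : ∀ x, ∃! i, IsConj (g i) x) (h : G → M) (hh : ∀ x c, h (c * x * c⁻¹) = h x) :
    ∑ x, h x = ∑ i, classCard (g i) • h (g i) := by
  choose φ hφ hφ_unique using hg
  rw [← sum_fiberwise univ φ h]
  refine sum_congr rfl fun i _ => ?_
  have hfiber : univ.filter (φ · = i) = univ.filter (IsConj (g i)) := by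
    ext x
    simp only [mem_filter, mem_univ, true_and]
    exact ⟨fun hx => hx ▸ hφ x, fun hx => (hφ_unique x i hx).symm⟩
  have hconst : ∀ x ∈ univ.filter (IsConj (g i)), h x = h (g i) := by
    intro x hx
    obtain ⟨c, rfl⟩ := isConj_iff.1 (mem_filter.1 hx).2
    exact hh (g i) c
  rw [hfiber, sum_congr rfl hconst, sum_const, classCard, Nat.card_eq_fintype_card,
    Fintype.card_subtype]

theorem cgIP_eq_sum_classCard (g : ι → G) (hg : ∀ x, ∃! i, IsConj (g i) x) {a b : G → ℂ}
    (ha : ∀ x c, a (c * x * c⁻¹) = a x) (hb : ∀ x c, b (c * x * c⁻¹) = b x) :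
    cgIP a b = (Fintype.card G : ℂ)⁻¹ *
      ∑ i, (classCard (g i) : ℂ) * (a (g i) * starRingEnd ℂ (b (g i))) := by
  rw [cgIP, sum_eq_sum_classCard_smul_s5 g hg _ fun x c => by rw [ha, hb]]
  simp only [nsmul_eq_mul]

end ClassFunction

theorem stmt5_general {G : Type} [Group G] [Fintype G] {n : ℕ}
    (g : Fin (n + 1) → G)
    (hg : ∀ x : G, ∃! k : Fin (n + 1), IsConj (g k) x)
    (R : Fin (n + 1) → FDRep ℂ G)
    {d : ℕ} (ρ : G →* Matrix.GeneralLinearGroup (Fin d) ℂ)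
    -- `ψ m` : the character of the `m`-th Adams operation applied to `ρ`
    (ψ : ℕ → G → ℂ)
    (hψ : ∀ m s, ψ m s = Matrix.trace (ρ (s ^ m) : Matrix (Fin d) (Fin d) ℂ))
    -- `P` : the graded Clebsch–Gordan matrix of the Adams operations of `ρ`
    (P : Matrix (Fin (n + 1)) (Fin (n + 1)) (PowerSeries ℂ))
    (hP : ∀ i j, P i j =
      PowerSeries.mk fun m => cgIP (fun s => ψ m s * (R i).character s) ((R j).character))
    (k : ℕ)
    (I J : Fin k → Fin (n + 1)) :
    (P.submatrix I J).det =
      (PowerSeries.C : ℂ →+* PowerSeries ℂ) ((Fintype.card G : ℂ)⁻¹ ^ k) *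
        ∑ Q ∈ Finset.univ.filter (fun Q : Fin k → Fin (n + 1) => StrictMono Q),
          (PowerSeries.C : ℂ →+* PowerSeries ℂ) (Matrix.of fun a b : Fin k => (R (I a)).character (g (Q b))).det *
            (PowerSeries.C : ℂ →+* PowerSeries ℂ) ((starRingEnd ℂ)
              (Matrix.of fun a b : Fin k => (R (J a)).character (g (Q b))).det) *
            ∏ m : Fin k, ((classCard (g (Q m)) : PowerSeries ℂ) *
              PowerSeries.mk fun m' =>
                Matrix.trace ((ρ (g (Q m)) : Matrix (Fin d) (Fin d) ℂ) ^ m')) := by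
  set C := (PowerSeries.C : ℂ →+* PowerSeries ℂ)
  set F : Fin (n + 1) → PowerSeries ℂ := fun p =>
    PowerSeries.mk fun m => Matrix.trace ((ρ (g p) : Matrix (Fin d) (Fin d) ℂ) ^ m)
  set X : Matrix (Fin k) (Fin (n + 1)) ℂ := Matrix.of fun a p => (R (I a)).character (g p)
  set Y : Matrix (Fin k) (Fin (n + 1)) ℂ := Matrix.of fun b p => (R (J b)).character (g p)
  set w : Fin (n + 1) → PowerSeries ℂ := fun p =>
    C ((Fintype.card G : ℂ)⁻¹ * classCard (g p)) * F p
  have hfactor : P.submatrix I J = X.map C * Matrix.diagonal w * Yᴴ.map C := by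
    ext a b m
    have hψ_conj : ∀ x c, ψ m (c * x * c⁻¹) = ψ m x := fun x c => by
      rw [hψ, hψ, conj_pow, Matrix.trace_apply_conj]
    rw [Matrix.submatrix_apply, hP, PowerSeries.coeff_mk, cgIP_eq_sum_classCard g hg
      (fun x c => by rw [hψ_conj, FDRep.char_conj]) (R (J b)).char_conj, Matrix.mul_apply,
      map_sum, mul_sum]
    refine sum_congr rfl fun p _ => ?_
    rw [Matrix.mul_diagonal, Matrix.map_apply, Matrix.map_apply,
      show C (X a p) * w p * C (Yᴴ p b) =
        C ((Fintype.card G : ℂ)⁻¹ * classCard (g p) * X a p * Yᴴ p b) * F p by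
          simp only [w, map_mul]; ring,
      PowerSeries.coeff_C_mul, PowerSeries.coeff_mk, hψ, map_pow, Units.val_pow_eq_pow_val]
    simp only [X, Y, Matrix.conjTranspose_apply, Matrix.of_apply, RCLike.star_def]
    ring
  have hw : ∀ Q : Fin k → Fin (n + 1), ∏ a, w (Q a) =
      C ((Fintype.card G : ℂ)⁻¹ ^ k) * ∏ a, ((classCard (g (Q a)) : PowerSeries ℂ) * F (Q a)) :=
    fun Q => by simp only [w, map_mul, map_natCast, prod_mul_distrib, prod_const, card_univ,
      Fintype.card_fin, map_pow, mul_assoc]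
  rw [hfactor, Matrix.det_map_mul_diagonal_mul_map_conjTranspose, mul_sum]
  refine sum_congr rfl fun Q _ => ?_
  rw [hw, RCLike.star_def]
  simp only [X, Y, F, Matrix.submatrix, Matrix.of_apply, id]
  ring

theorem stmt5 {G : Type} [Group G] [Fintype G] {n : ℕ}
    (g : Fin (n + 1) → G) (hg1 : g 0 = 1)
    (hg : ∀ x : G, ∃! k : Fin (n + 1), IsConj (g k) x)
    (R : Fin (n + 1) → FDRep ℂ G)
    (hsimple : ∀ i, Simple (R i))
    (htriv : ∀ x : G, (R 0).character x = 1)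
    (hdist : ∀ i j, i ≠ j → ¬ Nonempty (R i ≅ R j))
    {d : ℕ} (ρ : G →* Matrix.GeneralLinearGroup (Fin d) ℂ)
    -- `ψ m` : the character of the `m`-th Adams operation applied to `ρ`
    (ψ : ℕ → G → ℂ)
    (hψ : ∀ m s, ψ m s = Matrix.trace (ρ (s ^ m) : Matrix (Fin d) (Fin d) ℂ))
    -- `P` : the graded Clebsch–Gordan matrix of the Adams operations of `ρ`
    (P : Matrix (Fin (n + 1)) (Fin (n + 1)) (PowerSeries ℂ))
    (hP : ∀ i j, P i j =
      PowerSeries.mk fun m => cgIP (fun s => ψ m s * (R i).character s) ((R j).character))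
    (k : ℕ) (hk1 : 1 ≤ k) (hk2 : k ≤ n + 1)
    (I J : Fin k → Fin (n + 1)) (hI : StrictMono I) (hJ : StrictMono J) :
    (P.submatrix I J).det =
      (PowerSeries.C : ℂ →+* PowerSeries ℂ) ((Fintype.card G : ℂ)⁻¹ ^ k) *
        ∑ Q ∈ Finset.univ.filter (fun Q : Fin k → Fin (n + 1) => StrictMono Q),
          (PowerSeries.C : ℂ →+* PowerSeries ℂ) (Matrix.of fun a b : Fin k => (R (I a)).character (g (Q b))).det *
            (PowerSeries.C : ℂ →+* PowerSeries ℂ) ((starRingEnd ℂ)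
              (Matrix.of fun a b : Fin k => (R (J a)).character (g (Q b))).det) *
            ∏ m : Fin k, ((classCard (g (Q m)) : PowerSeries ℂ) *
              PowerSeries.mk fun m' =>
                Matrix.trace ((ρ (g (Q m)) : Matrix (Fin d) (Fin d) ℂ) ^ m')) :=
  stmt5_general g hg R ρ ψ hψ P hP k I J
end

section
/- Let ρ: G → GL_d(ℂ) be a representation and let S(q) be the Molien matrix over the field ℂ(q) of rational functions, with entries S(q)^i_j = (1/|G|) Σ_{k=0}^n |C_k|·χ_i(g_k)·conj(χ_j(g_k)) / det(1 − q·ρ(g_k)). Then for all 0 ≤ i, j ≤ n one has S(q)^i_j = Σ_{k=0}^n ⟨χ_i·χ_k, χ_j⟩ · S(q)^0_k, i.e., every row of the Molien matrix is obtained from its 0-th row (indexed by the trivial representation) by multiplication with the integer Clebsch–Gordan matrix M[R_i]. -/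
open CategoryTheory
open scoped Classical

/-- `det(1 − q·ρ(g))` as an element of the field `ℂ(q)` of rational functions. -/
noncomputable def molienDetRat {G : Type} [Group G] {d : ℕ}
    (ρ : G →* Matrix.GeneralLinearGroup (Fin d) ℂ) (s : G) : RatFunc ℂ :=
  Matrix.det ((1 : Matrix (Fin d) (Fin d) (RatFunc ℂ)) -
    ((ρ s : Matrix (Fin d) (Fin d) ℂ)).map fun a => RatFunc.X * RatFunc.C a)

/-! The entry `S^i_j` is the Molien-weighted average of the class function `χ_i · conj χ_j`.
Since there are as many irreducible characters as conjugacy classes, the character table is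
square, so row orthogonality makes it invertible and the irreducible characters form a basis of
the class functions. Expanding `conj χ_i · χ_j` in that basis and conjugating gives
`χ_i · conj χ_j = Σ_k ⟨χ_i χ_k, χ_j⟩ · conj χ_k`, and as `χ_0 = 1` the `k`-th term averages to
`⟨χ_i χ_k, χ_j⟩ · S^0_k`. -/

namespace Matrix

open scoped ComplexOrder

variable {m 𝕜 : Type*} [Fintype m] [DecidableEq m] [RCLike 𝕜]

theorem exists_posDef_conjTranspose_mul_mul_eq_of_pow_eq_one {M : Matrix m m 𝕜} {N : ℕ}
    (hM : M ^ (N + 1) = 1) : ∃ P : Matrix m m 𝕜, P.PosDef ∧ Mᴴ * P * M = P := by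
  set f : ℕ → Matrix m m 𝕜 := fun j => (M ^ j)ᴴ * M ^ j
  refine ⟨∑ j ∈ Finset.range (N + 1), f j, ?_, ?_⟩
  · rw [Finset.sum_range_succ']
    exact PosDef.posSemidef_add (posSemidef_sum _ fun j _ => posSemidef_conjTranspose_mul_self _)
      (by simpa [f] using PosDef.one)
  · have hshift : ∀ j, Mᴴ * f j * M = f (j + 1) := fun j => by
      simp only [f, pow_succ, conjTranspose_mul, Matrix.mul_assoc]
    have hperiod : f (N + 1) = f 0 := by
      simp only [f, hM, pow_zero, conjTranspose_one, Matrix.mul_one]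
    rw [Finset.mul_sum, Finset.sum_mul, Finset.sum_congr rfl fun j _ => hshift j,
      Finset.sum_range_succ, hperiod, ← Finset.sum_range_succ']

theorem trace_inv_eq_star_trace_of_isOfFinOrder {M : Matrix m m 𝕜} (hM : IsOfFinOrder M) :
    M⁻¹.trace = star M.trace := by
  obtain ⟨_ | N, hN, hMN⟩ := hM.exists_pow_eq_one
  · exact absurd hN (lt_irrefl 0)
  obtain ⟨P, hP, hPM⟩ := exists_posDef_conjTranspose_mul_mul_eq_of_pow_eq_one hMN
  have hMunit : IsUnit M.det := hM.isUnit.map detMonoidHom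
  have hPunit : IsUnit P.det := hP.isUnit.map detMonoidHom
  have hintertwine : Mᴴ * P = P * M⁻¹ :=
    calc Mᴴ * P = Mᴴ * P * M * M⁻¹ := by
          rw [Matrix.mul_assoc (Mᴴ * P), mul_nonsing_inv _ hMunit, Matrix.mul_one]
      _ = P * M⁻¹ := by rw [hPM]
  have hconj : Mᴴ = P * M⁻¹ * P⁻¹ := by
    rw [← hintertwine, Matrix.mul_assoc, mul_nonsing_inv _ hPunit, Matrix.mul_one]
  rw [← trace_conjTranspose, hconj, trace_mul_cycle, nonsing_inv_mul _ hPunit, Matrix.one_mul]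

end Matrix

theorem FDRep.char_inv {𝕜 G : Type*} [RCLike 𝕜] [Group G] [Finite G] (V : FDRep 𝕜 G) (g : G) :
    V.character g⁻¹ = starRingEnd 𝕜 (V.character g) := by
  let e := LinearMap.toMatrixAlgEquiv (Module.finBasis 𝕜 V)
  let ρ : G →* Matrix _ _ 𝕜 := e.toMonoidHom.comp V.ρ
  have htrace : ∀ x, V.character x = (ρ x).trace := fun x =>
    LinearMap.trace_eq_matrix_trace 𝕜 _ (V.ρ x)
  have h1 : ρ g⁻¹ * ρ g = 1 := by rw [← map_mul, inv_mul_cancel, map_one]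
  have hinv : ρ g⁻¹ = (ρ g)⁻¹ := (Matrix.inv_eq_left_inv h1).symm
  have hfin : IsOfFinOrder (ρ g) := ρ.isOfFinOrder (isOfFinOrder_of_finite g)
  rw [htrace, htrace, hinv]
  exact Matrix.trace_inv_eq_star_trace_of_isOfFinOrder hfin

theorem FDRep.char_eq_of_isConj {k G : Type*} [Field k] [Group G] (V : FDRep k G) {x y : G}
    (h : IsConj x y) : V.character x = V.character y := by
  obtain ⟨c, rfl⟩ := isConj_iff.mp h
  exact (V.char_conj x c).symm

theorem FDRep.sum_char_mul_star_char {G : Type} [Group G] [Fintype G] (V W : FDRep ℂ G)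
    [Simple V] [Simple W] :
    ∑ x : G, V.character x * starRingEnd ℂ (W.character x) =
      if Nonempty (V ≅ W) then (Fintype.card G : ℂ) else 0 := by
  have hcard : (Fintype.card G : ℂ) ≠ 0 := Nat.cast_ne_zero.mpr Fintype.card_ne_zero
  have : Invertible (Nat.card G : ℂ) := invertibleOfNonzero (by rwa [Nat.card_eq_fintype_card])
  have h := FDRep.char_orthonormal V W
  rw [Nat.card_eq_fintype_card, inv_mul_eq_iff_eq_mul₀ hcard] at h
  simp_rw [← FDRep.char_inv, h]
  split_ifs <;> simp

section CharacterTable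

open Matrix

variable {G : Type} [Group G] [Fintype G] {ι : Type*} [Fintype ι] {R : ι → FDRep ℂ G} {g : ι → G}

theorem sum_eq_sum_classCard_nsmul {M : Type*} [AddCommMonoid M]
    (hg : ∀ x : G, ∃! k, IsConj (g k) x) {F : G → M} (hF : ∀ x y, IsConj x y → F x = F y) :
    ∑ x, F x = ∑ k, classCard (g k) • F (g k) := by
  choose c hc hc_unique using hg
  have hfiber : ∀ k x, c x = k ↔ IsConj (g k) x := fun k x =>
    ⟨fun h => h ▸ hc x, fun h => (hc_unique x k h).symm⟩
  rw [← Fintype.sum_fiberwise c F]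
  refine Finset.sum_congr rfl fun k _ => ?_
  calc ∑ x : {x // c x = k}, F x = ∑ _x : {x // c x = k}, F (g k) :=
        Finset.sum_congr rfl fun x _ => (hF _ _ ((hfiber k x).mp x.2)).symm
    _ = classCard (g k) • F (g k) := by
        rw [Finset.sum_const, Finset.card_univ, ← Nat.card_eq_fintype_card, classCard,
          Nat.card_congr (Equiv.subtypeEquivRight (hfiber k))]

variable (R g)

noncomputable def charTable : Matrix ι ι ℂ :=
  Matrix.of fun i k => (R i).character (g k)

noncomputable def charTableInv : Matrix ι ι ℂ :=
  Matrix.of fun k j =>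
    (classCard (g k) : ℂ) / Fintype.card G * starRingEnd ℂ ((R j).character (g k))

variable {R g}

theorem charTable_mul_charTableInv (hg : ∀ x : G, ∃! k, IsConj (g k) x)
    (hsimple : ∀ i, Simple (R i)) (hdist : ∀ i j, i ≠ j → ¬ Nonempty (R i ≅ R j)) :
    charTable R g * charTableInv R g = 1 := by
  ext i j
  have hcard : (Fintype.card G : ℂ) ≠ 0 := Nat.cast_ne_zero.mpr Fintype.card_ne_zero
  have hiso : Nonempty (R i ≅ R j) ↔ i = j :=
    ⟨fun h => by_contra fun hij => hdist i j hij h, by rintro rfl; exact ⟨Iso.refl _⟩⟩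
  have := hsimple i
  have := hsimple j
  have horth := FDRep.sum_char_mul_star_char (R i) (R j)
  rw [sum_eq_sum_classCard_nsmul hg fun x y h => by
    rw [(R i).char_eq_of_isConj h, (R j).char_eq_of_isConj h], hiso] at horth
  calc (charTable R g * charTableInv R g) i j
      = (Fintype.card G : ℂ)⁻¹ *
          ∑ k, classCard (g k) •
            ((R i).character (g k) * starRingEnd ℂ ((R j).character (g k))) := by
        simp only [mul_apply, charTable, charTableInv, of_apply, nsmul_eq_mul, Finset.mul_sum]
        exact Finset.sum_congr rfl fun k _ => by ring
    _ = (1 : Matrix ι ι ℂ) i j := by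
        rw [horth, one_apply]
        split_ifs <;> simp [hcard]

theorem eq_sum_cgIP_mul_char (hg : ∀ x : G, ∃! k, IsConj (g k) x)
    (hsimple : ∀ i, Simple (R i)) (hdist : ∀ i j, i ≠ j → ¬ Nonempty (R i ≅ R j))
    {f : G → ℂ} (hf : ∀ x y, IsConj x y → f x = f y) (x : G) :
    f x = ∑ k, cgIP f (R k).character * (R k).character x := by
  set v : ι → ℂ := fun p => f (g p)
  have hcoeff : ∀ k, cgIP f (R k).character = (v ᵥ* charTableInv R g) k := fun k => by
    rw [cgIP, sum_eq_sum_classCard_nsmul hg fun x y h => by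
      rw [hf x y h, (R k).char_eq_of_isConj h], Finset.mul_sum]
    refine Finset.sum_congr rfl fun p _ => ?_
    simp only [v, charTableInv, Matrix.of_apply, nsmul_eq_mul]
    ring
  obtain ⟨m, hm, -⟩ := hg x
  have hinv := mul_eq_one_comm.mp (charTable_mul_charTableInv hg hsimple hdist)
  calc f x = (v ᵥ* (charTableInv R g * charTable R g)) m := by simp [hinv, v, hf _ _ hm]
    _ = ∑ k, (v ᵥ* charTableInv R g) k * charTable R g k m := by rw [← vecMul_vecMul]; rfl
    _ = ∑ k, cgIP f (R k).character * (R k).character x := Finset.sum_congr rfl fun k _ => by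
      rw [hcoeff, charTable, of_apply, (R k).char_eq_of_isConj hm]

theorem char_mul_star_char_eq_sum_cgIP_mul_star_char (hg : ∀ x : G, ∃! k, IsConj (g k) x)
    (hsimple : ∀ i, Simple (R i)) (hdist : ∀ i j, i ≠ j → ¬ Nonempty (R i ≅ R j))
    (i j : ι) (x : G) :
    (R i).character x * starRingEnd ℂ ((R j).character x) =
      ∑ k, cgIP ((R i).character * (R k).character) (R j).character *
        starRingEnd ℂ ((R k).character x) := by
  have hexp := eq_sum_cgIP_mul_char hg hsimple hdist
    (f := fun y => starRingEnd ℂ ((R i).character y) * (R j).character y)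
    (fun x y h => by rw [(R i).char_eq_of_isConj h, (R j).char_eq_of_isConj h]) x
  have hcoeff : ∀ k, cgIP (fun y => starRingEnd ℂ ((R i).character y) * (R j).character y)
      (R k).character = starRingEnd ℂ (cgIP ((R i).character * (R k).character) (R j).character) :=
    fun k => by
      simp only [cgIP, map_mul, map_sum, map_inv₀, map_natCast, Pi.mul_apply, Complex.conj_conj]
      exact congrArg _ (Finset.sum_congr rfl fun _ _ => mul_right_comm _ _ _)
  apply_fun starRingEnd ℂ at hexp
  simpa [hcoeff, map_sum] using hexp

end CharacterTable

theorem stmt7_general {G : Type} [Group G] [Fintype G] {n : ℕ}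
    (g : Fin (n + 1) → G)
    (hg : ∀ x : G, ∃! k : Fin (n + 1), IsConj (g k) x)
    (R : Fin (n + 1) → FDRep ℂ G)
    (hsimple : ∀ i, Simple (R i))
    (htriv : ∀ x : G, (R 0).character x = 1)
    (hdist : ∀ i j, i ≠ j → ¬ Nonempty (R i ≅ R j))
    {d : ℕ} (ρ : G →* Matrix.GeneralLinearGroup (Fin d) ℂ)
    -- `S` : the Molien matrix of `ρ`
    (S : Fin (n + 1) → Fin (n + 1) → RatFunc ℂ)
    (hS : ∀ i j, S i j =
      RatFunc.C ((Fintype.card G : ℂ)⁻¹) *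
        ∑ k : Fin (n + 1), (classCard (g k) : RatFunc ℂ) *
          RatFunc.C ((R i).character (g k)) *
          RatFunc.C ((starRingEnd ℂ) ((R j).character (g k))) / molienDetRat ρ (g k)) :
    ∀ i j : Fin (n + 1),
      S i j = ∑ k : Fin (n + 1),
        RatFunc.C (cgIP ((R i).character * (R k).character) ((R j).character)) * S 0 k := by
  intro i j
  have hrow : ∀ m, (classCard (g m) : RatFunc ℂ) * RatFunc.C ((R i).character (g m)) *
      RatFunc.C (starRingEnd ℂ ((R j).character (g m))) =
        ∑ k, RatFunc.C (cgIP ((R i).character * (R k).character) (R j).character) *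
          ((classCard (g m) : RatFunc ℂ) * RatFunc.C ((R 0).character (g m)) *
            RatFunc.C (starRingEnd ℂ ((R k).character (g m)))) := fun m => by
    rw [htriv, map_one, mul_one, mul_assoc, ← map_mul,
      char_mul_star_char_eq_sum_cgIP_mul_star_char hg hsimple hdist, map_sum, Finset.mul_sum]
    exact Finset.sum_congr rfl fun k _ => by rw [map_mul]; ring
  simp only [hS, hrow, Finset.sum_div, Finset.mul_sum]
  rw [Finset.sum_comm]
  exact Finset.sum_congr rfl fun k _ => Finset.sum_congr rfl fun m _ => by ring

theorem stmt7 {G : Type} [Group G] [Fintype G] {n : ℕ}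
    (g : Fin (n + 1) → G) (hg1 : g 0 = 1)
    (hg : ∀ x : G, ∃! k : Fin (n + 1), IsConj (g k) x)
    (R : Fin (n + 1) → FDRep ℂ G)
    (hsimple : ∀ i, Simple (R i))
    (htriv : ∀ x : G, (R 0).character x = 1)
    (hdist : ∀ i j, i ≠ j → ¬ Nonempty (R i ≅ R j))
    {d : ℕ} (ρ : G →* Matrix.GeneralLinearGroup (Fin d) ℂ)
    -- `S` : the Molien matrix of `ρ`
    (S : Fin (n + 1) → Fin (n + 1) → RatFunc ℂ)
    (hS : ∀ i j, S i j =
      RatFunc.C ((Fintype.card G : ℂ)⁻¹) *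
        ∑ k : Fin (n + 1), (classCard (g k) : RatFunc ℂ) *
          RatFunc.C ((R i).character (g k)) *
          RatFunc.C ((starRingEnd ℂ) ((R j).character (g k))) / molienDetRat ρ (g k)) :
    ∀ i j : Fin (n + 1),
      S i j = ∑ k : Fin (n + 1),
        RatFunc.C (cgIP ((R i).character * (R k).character) ((R j).character)) * S 0 k :=
  stmt7_general g hg R hsimple htriv hdist ρ S hS
end

section
/- Let ρ: G → GL_d(ℂ) be a faithful representation with d ≥ 1, and fix 0 ≤ j ≤ n. Suppose there are positive integers n_1, …, n_d and m_1, …, m_μ (for some μ ≥ 0) such that, in the field ℂ(q) of rational functions, (1/|G|) Σ_{k=0}^n |C_k|·conj(χ_j(g_k)) / det(1 − q·ρ(g_k)) = (Σ_{s=1}^μ q^{m_s}) / (Π_{t=1}^d (1 − q^{n_t})). Then μ·|G| = d_j·n_1·n_2⋯n_d. -/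
open CategoryTheory
open scoped Classical

/-!
Expand both sides of the Molien identity in Laurent series at `q = 1` and compare the
coefficients of `(q - 1)^{-d}`. On the right this coefficient is `(-1)^d μ / (n_1 ⋯ n_d)`,
since `1 - q^{n_t} = -n_t (q - 1) + O((q - 1)^2)`. On the left only the identity class
contributes: `ρ(g)` has finite order, so it is diagonalisable, and if `1` were a root of
multiplicity `d` of `det(1 - q ρ(g))` then `ρ(g)` would be unipotent, hence `ρ(g) = 1` and
`g = 1` by faithfulness. The identity term gives `(-1)^d χ_j(1) / |G|`.
-/

open Polynomial

namespace Matrix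

theorem charpolyRev_one {R n : Type*} [CommRing R] [Fintype n] [DecidableEq n] :
    (1 : Matrix n n R).charpolyRev = (1 - X) ^ Fintype.card n := by
  have : (1 : Matrix n n R[X]) - (X : R[X]) • (1 : Matrix n n R).map C =
      diagonal fun _ ↦ 1 - X := by
    ext i j
    rcases eq_or_ne i j with rfl | h <;> simp [*]
  rw [charpolyRev, this, det_diagonal, Finset.prod_const, Finset.card_univ]

variable {K n : Type*} [Field K] [Fintype n] [DecidableEq n]

theorem eq_one_of_pow_eq_one_of_charpoly_eq {A : Matrix n n K} {N : ℕ} (hN : (N : K) ≠ 0)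
    (hA : A ^ N = 1) (hchar : A.charpoly = (X - 1) ^ Fintype.card n) : A = 1 := by
  cases isEmpty_or_nonempty n
  · exact Subsingleton.elim _ _
  have hsep : Squarefree (X ^ N - 1 : K[X]) := by
    simpa using (separable_X_pow_sub_C (1 : K) hN one_ne_zero).squarefree
  have hsq : Squarefree (minpoly K A) :=
    hsep.squarefree_of_dvd (minpoly.dvd K A (by simp [hA]))
  have hmin : minpoly K A ∣ X - 1 := by
    rw [← hsq.dvd_pow_iff_dvd (Fintype.card_ne_zero (α := n)), ← hchar]
    exact minpoly.dvd K A (aeval_self_charpoly A)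
  simpa [sub_eq_zero] using minpoly.dvd_iff.mp hmin

theorem eq_one_of_pow_eq_one_of_dvd_charpolyRev {A : Matrix n n K} {N : ℕ} (hN : (N : K) ≠ 0)
    (hA : A ^ N = 1) (hdvd : (X - 1) ^ Fintype.card n ∣ A.charpolyRev) : A = 1 := by
  have hunit : IsUnit A := IsUnit.of_pow_eq_one hA (by rintro rfl; simp at hN)
  -- `charpolyRev A` is, up to a unit, the characteristic polynomial of `A⁻¹`.
  have hmonic : ((X - 1 : K[X]) ^ Fintype.card n).Monic := by
    simpa using (monic_X_sub_C (1 : K)).pow (Fintype.card n)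
  have hchar : A⁻¹.charpoly = (X - 1) ^ Fintype.card n := by
    refine eq_of_monic_of_dvd_of_natDegree_le hmonic (charpoly_monic A⁻¹) ?_ ?_
    · rw [charpoly_inv A hunit]
      exact hdvd.mul_left _
    · rw [charpoly_natDegree_eq_dim, ← C_1, natDegree_pow, natDegree_X_sub_C, mul_one]
  have hinv : A⁻¹ = 1 :=
    eq_one_of_pow_eq_one_of_charpoly_eq hN (by rw [inv_pow', hA, inv_one]) hchar
  rw [← nonsing_inv_nonsing_inv A ((isUnit_iff_isUnit_det A).mp hunit), hinv, inv_one]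

end Matrix

theorem HahnSeries.coeff_single_neg_mul_ofPowerSeries {R : Type*} [Semiring R] {e d : ℕ}
    (hed : e ≤ d) (B : PowerSeries R) :
    (single (-(e : ℤ)) (1 : R) * ofPowerSeries ℤ R B).coeff (-(d : ℤ)) =
      if e = d then PowerSeries.constantCoeff B else 0 := by
  rw [show -(d : ℤ) = ((e : ℤ) - d) + -(e : ℤ) by ring, coeff_single_mul_add, one_mul,
    PowerSeries.coeff_coe]
  split_ifs with h1 h2 h2
  · omega
  · rfl
  · simp [show e = d by omega]
  · omega

namespace RatFunc

variable {K : Type*} [Field K]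

/-- The Laurent expansion at `t`, in powers of the local parameter `q - t`. -/
noncomputable def laurentAt (t : K) : RatFunc K →+* LaurentSeries K :=
  liftRingHom ((HahnSeries.ofPowerSeries ℤ K).comp
      (coeToPowerSeries.ringHom.comp (compRingHom (Polynomial.X + Polynomial.C t))))
    (nonZeroDivisors_le_comap_nonZeroDivisors_of_injective _ <|
      (injective_iff_map_eq_zero _).mpr fun p hp ↦ by
        simpa [comp_X_add_C_eq_zero_iff] using
          HahnSeries.ofPowerSeries_injective (hp.trans (map_zero _).symm))

theorem laurentAt_algebraMap (t : K) (p : K[X]) :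
    laurentAt t (algebraMap K[X] (RatFunc K) p) =
      HahnSeries.ofPowerSeries ℤ K (p.comp (Polynomial.X + Polynomial.C t)) := by
  rw [← div_one (algebraMap _ _ p), ← map_one (algebraMap K[X] (RatFunc K)), laurentAt,
    liftRingHom_apply_div]
  simp

theorem coeff_laurentAt_C_mul (t a : K) (f : RatFunc K) (i : ℤ) :
    (laurentAt t (C a * f)).coeff i = a * (laurentAt t f).coeff i := by
  rw [map_mul, ← algebraMap_C, laurentAt_algebraMap, C_comp, Polynomial.coe_C,
    HahnSeries.ofPowerSeries_C, HahnSeries.C_mul_eq_smul, HahnSeries.coeff_smul, smul_eq_mul]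

theorem laurentAt_div_of_comp_eq {t : K} {A p U : K[X]} {e : ℕ}
    (hp : p.comp (Polynomial.X + Polynomial.C t) = Polynomial.X ^ e * U) (hU : U.coeff 0 ≠ 0) :
    laurentAt t (algebraMap _ _ A / algebraMap _ _ p) =
      HahnSeries.single (-(e : ℤ)) 1 * HahnSeries.ofPowerSeries ℤ K
        ((A.comp (Polynomial.X + Polynomial.C t) : PowerSeries K) * (U : PowerSeries K)⁻¹) := by
  have hU' : PowerSeries.constantCoeff (U : PowerSeries K) ≠ 0 := by
    rwa [constantCoeff_coe]
  have hden : HahnSeries.ofPowerSeries ℤ K (U : PowerSeries K) ≠ 0 := by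
    rw [Ne, ← map_zero (HahnSeries.ofPowerSeries ℤ K),
      HahnSeries.ofPowerSeries_injective.eq_iff]
    rintro h
    simp [h] at hU'
  rw [map_div₀, laurentAt_algebraMap, laurentAt_algebraMap, hp, Polynomial.coe_mul,
    Polynomial.coe_pow, Polynomial.coe_X, map_mul, HahnSeries.ofPowerSeries_X_pow,
    div_eq_iff (mul_ne_zero (by simp) hden), map_mul, mul_mul_mul_comm,
    HahnSeries.single_mul_single, neg_add_cancel, one_mul, mul_assoc, ← map_mul,
    PowerSeries.inv_mul_cancel _ hU']
  simp

theorem coeff_laurentAt_div_of_comp_eq {t : K} {A p U : K[X]} {e d : ℕ}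
    (hp : p.comp (Polynomial.X + Polynomial.C t) = Polynomial.X ^ e * U) (hU : U.coeff 0 ≠ 0)
    (hed : e ≤ d) :
    (laurentAt t (algebraMap _ _ A / algebraMap _ _ p)).coeff (-(d : ℤ)) =
      if e = d then A.eval t / U.coeff 0 else 0 := by
  rw [laurentAt_div_of_comp_eq hp hU, HahnSeries.coeff_single_neg_mul_ofPowerSeries hed]
  simp [div_eq_mul_inv, coeff_zero_eq_eval_zero, eval_comp]

end RatFunc

theorem Matrix.coeff_laurentAt_one_div_charpolyRev {K n : Type*} [Field K] [DecidableEq K]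
    [Fintype n] [DecidableEq n] {M : Matrix n n K} {N : ℕ} (hN : (N : K) ≠ 0) (hM : M ^ N = 1)
    (A : K[X]) :
    (RatFunc.laurentAt 1 (algebraMap K[X] (RatFunc K) A / algebraMap _ _ M.charpolyRev)).coeff
        (-(Fintype.card n : ℤ)) = if M = 1 then (-1) ^ Fintype.card n * A.eval 1 else 0 := by
  split_ifs with h
  · subst h
    have hcomp : (1 : Matrix n n K).charpolyRev.comp (X + C 1) =
        X ^ Fintype.card n * C ((-1) ^ Fintype.card n) := by
      rw [charpolyRev_one, pow_comp, sub_comp, one_comp, X_comp, C_pow, C_neg, C_1, ← mul_pow]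
      ring
    rw [RatFunc.coeff_laurentAt_div_of_comp_eq hcomp
      (by rw [coeff_C_zero]; exact pow_ne_zero _ (neg_ne_zero.mpr one_ne_zero)) le_rfl,
      if_pos rfl, coeff_C_zero, div_eq_mul_inv, ← inv_pow, inv_neg_one, mul_comm]
  · have hD : M.charpolyRev.comp (X + C 1) ≠ 0 := by
      rw [Ne, comp_X_add_C_eq_zero_iff]
      intro h0
      simpa [h0] using M.eval_charpolyRev
    obtain ⟨U, hU, hXU⟩ := exists_eq_pow_rootMultiplicity_mul_and_not_dvd _ hD 0
    rw [C_0, sub_zero] at hU hXU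
    have hlt : (M.charpolyRev.comp (X + C 1)).rootMultiplicity 0 < Fintype.card n := by
      by_contra! hle
      refine h (M.eq_one_of_pow_eq_one_of_dvd_charpolyRev hN hM ?_)
      rw [← C_1, X_sub_C_pow_dvd_iff, hU]
      exact (pow_dvd_pow X hle).mul_right U
    rw [RatFunc.coeff_laurentAt_div_of_comp_eq hU (by rwa [X_dvd_iff] at hXU) hlt.le,
      if_neg hlt.ne]

theorem RatFunc.coeff_laurentAt_one_sum_X_pow_div_prod {K ι σ : Type*} [Field K] [Fintype ι]
    [Fintype σ] (n : ι → ℕ) (hn : ∀ t, (n t : K) ≠ 0) (m : σ → ℕ) :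
    (laurentAt 1 ((∑ s, X ^ m s) / ∏ t, (1 - X ^ n t))).coeff (-(Fintype.card ι : ℤ)) =
      (-1) ^ Fintype.card ι * Fintype.card σ / ∏ t, (n t : K) := by
  have hfactor : ∀ k : ℕ, ((1 : K[X]) - Polynomial.X ^ k).comp (Polynomial.X + Polynomial.C 1) =
      Polynomial.X * -∑ i ∈ Finset.range k, (Polynomial.X + Polynomial.C 1) ^ i := by
    intro k
    rw [sub_comp, one_comp, pow_comp, X_comp, Polynomial.C_1]
    linear_combination geom_sum_mul (Polynomial.X + 1 : K[X]) k
  have hcomp : (∏ t, ((1 : K[X]) - Polynomial.X ^ n t)).comp (Polynomial.X + Polynomial.C 1) =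
      Polynomial.X ^ Fintype.card ι *
        ∏ t, -∑ i ∈ Finset.range (n t), (Polynomial.X + Polynomial.C 1) ^ i := by
    rw [Polynomial.prod_comp, Finset.prod_congr rfl fun t _ ↦ hfactor (n t),
      Finset.prod_mul_distrib, Finset.prod_const, Finset.card_univ]
  have hU :
      (∏ t, -∑ i ∈ Finset.range (n t), (Polynomial.X + Polynomial.C 1 : K[X]) ^ i).coeff 0 =
        ∏ t, -(n t : K) := by
    simp [coeff_zero_eq_eval_zero, eval_prod, eval_finsetSum]
  have hrat : (∑ s, X ^ m s) / ∏ t, (1 - X ^ n t) =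
      algebraMap K[X] (RatFunc K) (∑ s, Polynomial.X ^ m s) /
        algebraMap _ _ (∏ t, (1 - Polynomial.X ^ n t : K[X])) := by
    simp [map_sum, map_prod]
  rw [hrat, coeff_laurentAt_div_of_comp_eq hcomp (hU ▸ Finset.prod_ne_zero_iff.mpr
    fun t _ ↦ neg_ne_zero.mpr (hn t)) le_rfl, if_pos rfl, hU, Finset.prod_neg]
  have : ∏ t, (n t : K) ≠ 0 := Finset.prod_ne_zero_iff.mpr fun t _ ↦ hn t
  field_simp
  simp [eval_finsetSum, ← pow_add, ← two_mul, pow_mul]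

theorem classCard_one {G : Type*} [Group G] : classCard (1 : G) = 1 := by
  simp [classCard]

theorem molienDetRat_eq_algebraMap_charpolyRev {G : Type} [Group G] {d : ℕ}
    (ρ : G →* Matrix.GeneralLinearGroup (Fin d) ℂ) (s : G) :
    molienDetRat ρ s =
      algebraMap ℂ[X] (RatFunc ℂ) (ρ s : Matrix (Fin d) (Fin d) ℂ).charpolyRev := by
  rw [Matrix.charpolyRev, molienDetRat, RingHom.map_det]
  congr 1
  ext i j
  rcases eq_or_ne i j with h | h <;>
    simp [h, RatFunc.algebraMap_X, RatFunc.algebraMap_C] <;> ring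

theorem coeff_laurentAt_one_C_div_molienDetRat {G : Type} [Group G] [Fintype G] {d : ℕ}
    (ρ : G →* Matrix.GeneralLinearGroup (Fin d) ℂ) (x : G) (c : ℂ) :
    (RatFunc.laurentAt 1 (RatFunc.C c / molienDetRat ρ x)).coeff (-(d : ℤ)) =
      if ρ x = 1 then (-1) ^ d * c else 0 := by
  have hpow : (ρ x : Matrix (Fin d) (Fin d) ℂ) ^ Fintype.card G = 1 := by
    rw [← Units.val_pow_eq_pow_val, ← map_pow, pow_card_eq_one, map_one, Units.val_one]
  have := Matrix.coeff_laurentAt_one_div_charpolyRev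
    (Nat.cast_ne_zero.mpr Fintype.card_ne_zero) hpow (Polynomial.C c)
  rw [Fintype.card_fin, eval_C, ← molienDetRat_eq_algebraMap_charpolyRev,
    RatFunc.algebraMap_C] at this
  simp only [this, Units.val_eq_one]

theorem stmt8_general {G : Type} [Group G] [Fintype G] {n : ℕ}
    (g : Fin (n + 1) → G) (hg1 : g 0 = 1)
    (hg : ∀ x : G, ∃! k : Fin (n + 1), IsConj (g k) x)
    (R : Fin (n + 1) → FDRep ℂ G)
    {d : ℕ} (ρ : G →* Matrix.GeneralLinearGroup (Fin d) ℂ)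
    (hfaithful : Function.Injective ρ)
    (j : Fin (n + 1))
    {μ : ℕ} (nn : Fin d → ℕ) (hnn : ∀ t, 0 < nn t)
    (m : Fin μ → ℕ)
    -- Cohen–Macaulay property: the Molien series of the `R j`-isotypic component
    -- is `(Σ_s q^{m_s}) / (Π_t (1 − q^{n_t}))`
    (hCM : RatFunc.C ((Fintype.card G : ℂ)⁻¹) *
        (∑ k : Fin (n + 1), (classCard (g k) : RatFunc ℂ) *
          RatFunc.C ((starRingEnd ℂ) ((R j).character (g k))) / molienDetRat ρ (g k)) =
      (∑ s : Fin μ, (RatFunc.X : RatFunc ℂ) ^ m s) /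
        ∏ t : Fin d, ((1 : RatFunc ℂ) - RatFunc.X ^ nn t)) :
    (μ : ℂ) * (Fintype.card G : ℂ) = (R j).character 1 * ∏ t : Fin d, (nn t : ℂ) := by
  have hone : ∀ k, ρ (g k) = 1 ↔ k = 0 := by
    intro k
    rw [← map_one ρ, hfaithful.eq_iff]
    refine ⟨fun h ↦ (hg 1).unique (h ▸ IsConj.refl _) (hg1 ▸ IsConj.refl _), ?_⟩
    rintro rfl
    exact hg1
  have hterm : ∀ k, (RatFunc.laurentAt 1 ((classCard (g k) : RatFunc ℂ) *
      RatFunc.C ((starRingEnd ℂ) ((R j).character (g k))) / molienDetRat ρ (g k))).coeff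
        (-(d : ℤ)) = if k = 0 then (-1) ^ d * (R j).character 1 else 0 := by
    intro k
    rw [← map_natCast RatFunc.C, ← map_mul, coeff_laurentAt_one_C_div_molienDetRat]
    simp only [hone]
    split_ifs with hk
    · simp [hk, hg1, classCard_one, FDRep.char_one]
    · rfl
  have hcoeff := congrArg (fun f ↦ (RatFunc.laurentAt 1 f).coeff (-(d : ℤ))) hCM
  have hR := RatFunc.coeff_laurentAt_one_sum_X_pow_div_prod nn
    (fun t ↦ (Nat.cast_ne_zero (R := ℂ)).mpr (hnn t).ne') m
  rw [Fintype.card_fin, Fintype.card_fin] at hR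
  rw [RatFunc.coeff_laurentAt_C_mul, map_sum, HahnSeries.coeff_sum,
    Finset.sum_congr rfl fun k _ ↦ hterm k, Finset.sum_ite_eq', if_pos (Finset.mem_univ _),
    hR] at hcoeff
  have hprod : ∏ t, (nn t : ℂ) ≠ 0 :=
    Finset.prod_ne_zero_iff.mpr fun t _ ↦ by simp [(hnn t).ne']
  have hcard : (Fintype.card G : ℂ) ≠ 0 := Nat.cast_ne_zero.mpr Fintype.card_ne_zero
  field_simp at hcoeff
  linear_combination -hcoeff

theorem stmt8 {G : Type} [Group G] [Fintype G] {n : ℕ}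
    (g : Fin (n + 1) → G) (hg1 : g 0 = 1)
    (hg : ∀ x : G, ∃! k : Fin (n + 1), IsConj (g k) x)
    (R : Fin (n + 1) → FDRep ℂ G)
    (hsimple : ∀ i, Simple (R i))
    (htriv : ∀ x : G, (R 0).character x = 1)
    (hdist : ∀ i j, i ≠ j → ¬ Nonempty (R i ≅ R j))
    {d : ℕ} (hd : 1 ≤ d) (ρ : G →* Matrix.GeneralLinearGroup (Fin d) ℂ)
    (hfaithful : Function.Injective ρ)
    (j : Fin (n + 1))
    {μ : ℕ} (nn : Fin d → ℕ) (hnn : ∀ t, 0 < nn t)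
    (m : Fin μ → ℕ) (hm : ∀ s, 0 < m s)
    -- Cohen–Macaulay property: the Molien series of the `R j`-isotypic component
    -- is `(Σ_s q^{m_s}) / (Π_t (1 − q^{n_t}))`
    (hCM : RatFunc.C ((Fintype.card G : ℂ)⁻¹) *
        (∑ k : Fin (n + 1), (classCard (g k) : RatFunc ℂ) *
          RatFunc.C ((starRingEnd ℂ) ((R j).character (g k))) / molienDetRat ρ (g k)) =
      (∑ s : Fin μ, (RatFunc.X : RatFunc ℂ) ^ m s) /
        ∏ t : Fin d, ((1 : RatFunc ℂ) - RatFunc.X ^ nn t)) :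
    (μ : ℂ) * (Fintype.card G : ℂ) = (R j).character 1 * ∏ t : Fin d, (nn t : ℂ) :=
  stmt8_general g hg1 hg R ρ hfaithful j nn hnn m hCM
end

section
/- Let ρ: G → GL_d(ℂ) (d ≥ 1) be a representation whose image acts freely, i.e., det(1 − ρ(g)) ≠ 0 for every g ≠ 1 in G. For 0 ≤ a, b ≤ n define the generalized η-invariants η^a_b := (2·(−1)^d/|G|) · Σ_{k=1}^n |C_k|·χ_a(g_k)·conj(χ_b(g_k)) / det(1 − ρ(g_k)). Then for all 0 ≤ i, j ≤ n one has η^i_j = Σ_{k=0}^n ⟨χ_i·χ_k, χ_j⟩ · η^0_k. -/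
/-!
Both sides are sums over the non-identity classes against the same weights (using `χ_0 = 1`), so
it suffices to prove the pointwise identity `χ_i(x) conj χ_j(x) = Σ_k ⟨χ_i χ_k, χ_j⟩ conj χ_k(x)`.
This is the expansion of the class function `χ_i conj χ_j` in the orthonormal basis `conj χ_k` of
class functions. That the characters span the class functions is column orthogonality, which
follows from row orthogonality because the character table is square. Conjugating a character
inverts its argument, by Weyl's unitarian trick.
-/

open CategoryTheory
open scoped Classical

namespace Matrix

open scoped ComplexOrder

variable {G ι : Type*} [Group G] [Fintype G] [Fintype ι] [DecidableEq ι]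

noncomputable def invariantForm (σ : G →* Matrix ι ι ℂ) : Matrix ι ι ℂ :=
  ∑ y : G, (σ y)ᴴ * σ y

theorem invariantForm_posDef (σ : G →* Matrix ι ι ℂ) : (invariantForm σ).PosDef :=
  posDef_sum Finset.univ_nonempty fun y _ =>
    .conjTranspose_mul_self _ (mulVec_injective_of_isUnit ((Group.isUnit y).map σ))

theorem conjTranspose_mul_invariantForm_mul (σ : G →* Matrix ι ι ℂ) (x : G) :
    (σ x)ᴴ * invariantForm σ * σ x = invariantForm σ := by
  simp only [invariantForm, Finset.mul_sum, Finset.sum_mul]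
  refine Fintype.sum_equiv (Equiv.mulRight x) _ _ fun y => ?_
  simp only [Equiv.coe_mulRight, map_mul, conjTranspose_mul, Matrix.mul_assoc]

/-- `invariantForm σ` is a positive definite form for which every `σ x` is unitary, so `(σ x)ᴴ`
is conjugate to `σ x⁻¹`. -/
theorem star_trace_eq_trace_map_inv (σ : G →* Matrix ι ι ℂ) (x : G) :
    star (σ x).trace = (σ x⁻¹).trace := by
  set H := invariantForm σ
  have hdet : IsUnit H.det := (isUnit_iff_isUnit_det H).mp (invariantForm_posDef σ).isUnit
  have hintertwine : (σ x)ᴴ * H = H * σ x⁻¹ :=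
    calc (σ x)ᴴ * H = (σ x)ᴴ * H * σ x * σ x⁻¹ := by
          rw [Matrix.mul_assoc _ (σ x), ← map_mul, mul_inv_cancel, map_one, Matrix.mul_one]
      _ = H * σ x⁻¹ := by rw [conjTranspose_mul_invariantForm_mul]
  have hconj : (σ x)ᴴ = H * σ x⁻¹ * H⁻¹ := by
    rw [← hintertwine, Matrix.mul_assoc, mul_nonsing_inv _ hdet, Matrix.mul_one]
  rw [← trace_conjTranspose, hconj, trace_mul_cycle, nonsing_inv_mul _ hdet, Matrix.one_mul]

end Matrix

namespace FDRep

variable {G : Type*} [Group G]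

theorem character_eq_of_isConj_s13 (V : FDRep ℂ G) {x y : G} (h : IsConj x y) :
    V.character x = V.character y := by
  obtain ⟨c, rfl⟩ := isConj_iff.mp h
  exact (V.char_conj x c).symm

variable [Fintype G]

theorem star_character (V : FDRep ℂ G) (x : G) : star (V.character x) = V.character x⁻¹ := by
  let b := Module.finBasis ℂ V
  let σ : G →* Matrix (Fin (Module.finrank ℂ V)) (Fin (Module.finrank ℂ V)) ℂ :=
    (LinearMap.toMatrixAlgEquiv b).toMonoidHom.comp V.ρ
  have hchar : ∀ y, V.character y = (σ y).trace := fun y =>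
    LinearMap.trace_eq_matrix_trace ℂ b _
  rw [hchar, hchar, Matrix.star_trace_eq_trace_map_inv]

theorem cgIP_character (V W : FDRep ℂ G) [Simple V] [Simple W] :
    cgIP V.character W.character = if Nonempty (V ≅ W) then 1 else 0 := by
  have hinv : ∀ x, (starRingEnd ℂ) (W.character x) = W.character x⁻¹ := star_character W
  simp only [cgIP, hinv, ← Nat.card_eq_fintype_card]
  exact char_orthonormal V W

end FDRep

section CharacterTable

open Matrix

variable {G ι : Type*} [Group G]

noncomputable def characterTable (g : ι → G) (R : ι → FDRep ℂ G) : Matrix ι ι ℂ :=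
  of fun k m => (R k).character (g m)

variable [Fintype G]

theorem sum_eq_sum_classCard_mul [Fintype ι] {g : ι → G} (hg : ∀ x : G, ∃! k, IsConj (g k) x)
    (f : G → ℂ) (hf : ∀ x y, IsConj x y → f x = f y) :
    ∑ x, f x = ∑ k, (classCard (g k) : ℂ) * f (g k) := by
  let cls : G → ι := fun x => (hg x).exists.choose
  have hcls : ∀ x k, cls x = k ↔ IsConj (g k) x := fun x k =>
    ⟨fun h => h ▸ (hg x).exists.choose_spec, (hg x).unique (hg x).exists.choose_spec⟩
  rw [← Finset.sum_fiberwise Finset.univ cls f]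
  refine Fintype.sum_congr _ _ fun k => ?_
  calc ∑ x ∈ Finset.univ with cls x = k, f x = ∑ x ∈ Finset.univ with IsConj (g k) x, f (g k) :=
        Finset.sum_congr (Finset.filter_congr fun x _ => hcls x k)
          fun x hx => (hf _ _ (Finset.mem_filter.1 hx).2).symm
    _ = (classCard (g k) : ℂ) * f (g k) := by
        rw [Finset.sum_const, nsmul_eq_mul, classCard, Nat.card_eq_fintype_card,
          Fintype.card_subtype]

variable {g : ι → G} (R : ι → FDRep ℂ G) [∀ k, Simple (R k)]

theorem cgIP_character_eq_ite (hdist : ∀ k l, k ≠ l → ¬ Nonempty (R k ≅ R l)) (k l : ι) :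
    cgIP (R k).character (R l).character = if k = l then 1 else 0 := by
  rw [FDRep.cgIP_character]
  by_cases h : k = l
  · subst h
    rw [if_pos ⟨Iso.refl (R k)⟩, if_pos rfl]
  · rw [if_neg h, if_neg (hdist k l h)]

variable [Fintype ι]

theorem characterTable_mul_diagonal_mul_conjTranspose (hg : ∀ x : G, ∃! k, IsConj (g k) x)
    (hdist : ∀ k l, k ≠ l → ¬ Nonempty (R k ≅ R l)) :
    characterTable g R * diagonal (fun m => (classCard (g m) : ℂ) / Fintype.card G) *
      (characterTable g R)ᴴ = 1 := by
  ext k l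
  rw [one_apply, ← cgIP_character_eq_ite R hdist, cgIP,
    sum_eq_sum_classCard_mul hg _ fun x y h => by
      rw [(R k).character_eq_of_isConj_s13 h, (R l).character_eq_of_isConj_s13 h],
    Finset.mul_sum, mul_apply]
  simp only [mul_diagonal, characterTable, conjTranspose_apply, of_apply,
    RCLike.star_def]
  exact Fintype.sum_congr _ _ fun m => by ring

theorem conjTranspose_characterTable_mul_mul_diagonal (hg : ∀ x : G, ∃! k, IsConj (g k) x)
    (hdist : ∀ k l, k ≠ l → ¬ Nonempty (R k ≅ R l)) :
    (characterTable g R)ᴴ *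
      (characterTable g R * diagonal (fun m => (classCard (g m) : ℂ) / Fintype.card G)) = 1 :=
  mul_eq_one_comm.mp (characterTable_mul_diagonal_mul_conjTranspose R hg hdist)

open ComplexConjugate in
theorem sum_inner_character_mul_conj_character_eq (hg : ∀ x : G, ∃! k, IsConj (g k) x)
    (hdist : ∀ k l, k ≠ l → ¬ Nonempty (R k ≅ R l))
    (f : G → ℂ) (hf : ∀ x y, IsConj x y → f x = f y) (x : G) :
    ∑ k, ((Fintype.card G : ℂ)⁻¹ * ∑ y, f y * (R k).character y) * conj ((R k).character x) =
      f x := by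
  obtain ⟨m, hm, -⟩ := hg x
  have hcol := congrFun (congrFun (conjTranspose_characterTable_mul_mul_diagonal R hg hdist) m)
  simp only [← hf _ _ hm, ← fun k => (R k).character_eq_of_isConj_s13 hm]
  calc ∑ k, ((Fintype.card G : ℂ)⁻¹ * ∑ y, f y * (R k).character y) * conj ((R k).character (g m))
      = ∑ k, ∑ m', f (g m') * (conj ((R k).character (g m)) *
          ((R k).character (g m') * ((classCard (g m') : ℂ) / Fintype.card G))) := by
        refine Fintype.sum_congr _ _ fun k => ?_
        rw [sum_eq_sum_classCard_mul hg _ fun x y h => by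
          rw [hf x y h, (R k).character_eq_of_isConj_s13 h], Finset.mul_sum, Finset.sum_mul]
        exact Fintype.sum_congr _ _ fun m' => by ring
    _ = ∑ m', f (g m') * (1 : Matrix ι ι ℂ) m m' := by
        rw [Finset.sum_comm]
        refine Fintype.sum_congr _ _ fun m' => ?_
        rw [← Finset.mul_sum, ← hcol m', mul_apply]
        simp only [mul_diagonal, characterTable, conjTranspose_apply, of_apply, RCLike.star_def]
    _ = f (g m) := by simp [one_apply]

open ComplexConjugate in
theorem character_mul_conj_character_eq_sum_cgIP (hg : ∀ x : G, ∃! k, IsConj (g k) x)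
    (hdist : ∀ k l, k ≠ l → ¬ Nonempty (R k ≅ R l)) (i j : ι) (x : G) :
    (R i).character x * conj ((R j).character x) =
      ∑ k, cgIP ((R i).character * (R k).character) (R j).character * conj ((R k).character x) := by
  rw [← sum_inner_character_mul_conj_character_eq R hg hdist
    (fun y => (R i).character y * conj ((R j).character y)) (fun x y h => by
      rw [(R i).character_eq_of_isConj_s13 h, (R j).character_eq_of_isConj_s13 h]) x]
  refine Fintype.sum_congr _ _ fun k => ?_
  simp only [cgIP, Pi.mul_apply]
  congr 2
  exact Fintype.sum_congr _ _ fun y => by ring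

end CharacterTable

theorem stmt13_general {G : Type} [Group G] [Fintype G] {n : ℕ}
    (g : Fin (n + 1) → G)
    (hg : ∀ x : G, ∃! k : Fin (n + 1), IsConj (g k) x)
    (R : Fin (n + 1) → FDRep ℂ G)
    (hsimple : ∀ i, Simple (R i))
    (htriv : ∀ x : G, (R 0).character x = 1)
    (hdist : ∀ i j, i ≠ j → ¬ Nonempty (R i ≅ R j))
    {d : ℕ} (ρ : G →* Matrix.GeneralLinearGroup (Fin d) ℂ)
    -- `η a b` : the generalized η-invariants (`k` ranges over `1, …, n`)
    (η : Fin (n + 1) → Fin (n + 1) → ℂ)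
    (hη : ∀ a b, η a b =
      2 * (-1 : ℂ) ^ d / (Fintype.card G : ℂ) *
        ∑ k : Fin n, (classCard (g k.succ) : ℂ) *
          (R a).character (g k.succ) * (starRingEnd ℂ) ((R b).character (g k.succ)) /
          Matrix.det ((1 : Matrix (Fin d) (Fin d) ℂ) -
            (ρ (g k.succ) : Matrix (Fin d) (Fin d) ℂ))) :
    ∀ i j : Fin (n + 1),
      η i j = ∑ k : Fin (n + 1),
        cgIP ((R i).character * (R k).character) ((R j).character) * η 0 k := by
  intro i j
  set w : Fin n → ℂ := fun t => 2 * (-1 : ℂ) ^ d / (Fintype.card G : ℂ) *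
    (classCard (g t.succ) : ℂ) / Matrix.det (1 - (ρ (g t.succ) : Matrix (Fin d) (Fin d) ℂ))
  have hη' : ∀ a b, η a b = ∑ t, w t *
      ((R a).character (g t.succ) * (starRingEnd ℂ) ((R b).character (g t.succ))) := by
    intro a b
    rw [hη, Finset.mul_sum]
    exact Fintype.sum_congr _ _ fun t => by ring
  calc η i j = ∑ t, w t * ∑ k, cgIP ((R i).character * (R k).character) (R j).character *
        (starRingEnd ℂ) ((R k).character (g t.succ)) := by
        simp only [hη', character_mul_conj_character_eq_sum_cgIP R hg hdist]
    _ = _ := by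
        simp only [hη', htriv, one_mul, Finset.mul_sum]
        rw [Finset.sum_comm]
        exact Fintype.sum_congr _ _ fun k => Fintype.sum_congr _ _ fun t => by ring

theorem stmt13 {G : Type} [Group G] [Fintype G] {n : ℕ}
    (g : Fin (n + 1) → G) (hg1 : g 0 = 1)
    (hg : ∀ x : G, ∃! k : Fin (n + 1), IsConj (g k) x)
    (R : Fin (n + 1) → FDRep ℂ G)
    (hsimple : ∀ i, Simple (R i))
    (htriv : ∀ x : G, (R 0).character x = 1)
    (hdist : ∀ i j, i ≠ j → ¬ Nonempty (R i ≅ R j))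
    {d : ℕ} (hd : 1 ≤ d) (ρ : G →* Matrix.GeneralLinearGroup (Fin d) ℂ)
    -- the image of `ρ` acts freely
    (hfree : ∀ x : G, x ≠ 1 →
      Matrix.det ((1 : Matrix (Fin d) (Fin d) ℂ) - (ρ x : Matrix (Fin d) (Fin d) ℂ)) ≠ 0)
    -- `η a b` : the generalized η-invariants (`k` ranges over `1, …, n`)
    (η : Fin (n + 1) → Fin (n + 1) → ℂ)
    (hη : ∀ a b, η a b =
      2 * (-1 : ℂ) ^ d / (Fintype.card G : ℂ) *
        ∑ k : Fin n, (classCard (g k.succ) : ℂ) *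
          (R a).character (g k.succ) * (starRingEnd ℂ) ((R b).character (g k.succ)) /
          Matrix.det ((1 : Matrix (Fin d) (Fin d) ℂ) -
            (ρ (g k.succ) : Matrix (Fin d) (Fin d) ℂ))) :
    ∀ i j : Fin (n + 1),
      η i j = ∑ k : Fin (n + 1),
        cgIP ((R i).character * (R k).character) ((R j).character) * η 0 k :=
  stmt13_general g hg R hsimple htriv hdist ρ η hη
end
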